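/- arXiv:1203.1074 — 2 statements merged into one kernel-verified Lean document; each statement's English description precedes it below -/
import Mathlib

section
/- Let η, η', v_Q ∈ ℝⁿ, κ, κ' ∈ ℝ with ⟨η, v_Q⟩ = 1 and ⟨η', v_Q⟩ = −1; let Â(x) = x + ⟨η'−η, x⟩·v_Q and A(x) = Â(x) + (κ'−κ)·v_Q. Let w ∈ ℝⁿ with ⟨η, w⟩ < 0, let b ∈ ℝⁿ, ℓ_P > 0, set x = b + ℓ_P·w, and suppose ⟨η, x⟩ + κ > 0. Let w' = Â(w), x' = A(x), and let ℓ' ≥ 0 satisfy ⟨η', x' + ℓ'·w'⟩ + κ' ≥ 0. Then ℓ_P + ℓ' ≤ (⟨η, b⟩ + κ) / (−⟨η, w⟩). -/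
/-- A symmetric extended probe is no longer than the distance from the start of
the initial probe to the base facet of the deflecting probe, along the direction
of the initial probe. -/
theorem stmt4 (n : ℕ) (η η' vQ w b x w' x' : Fin n → ℝ) (κ κ' lP l' : ℝ)
    (h1 : ∑ i, η i * vQ i = 1) (h2 : ∑ i, η' i * vQ i = -1)
    (hw : ∑ i, η i * w i < 0) (hlP : 0 < lP)
    (hx : x = b + lP • w)
    (hxin : 0 < (∑ i, η i * x i) + κ)
    (hw' : w' = w + (∑ i, (η' i - η i) * w i) • vQ)
    (hx' : x' = x + (∑ i, (η' i - η i) * x i) • vQ + (κ' - κ) • vQ)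
    (hl' : 0 ≤ l')
    (hexit : 0 ≤ (∑ i, η' i * (x' + l' • w') i) + κ') :
    lP + l' ≤ ((∑ i, η i * b i) + κ) / (-(∑ i, η i * w i)) := by
  subst hx' hw' hx
  have e1 : ∀ i, η' i * ((b + lP • w +
        (∑ i, (η' i - η i) * (b + lP • w) i) • vQ + (κ' - κ) • vQ +
        l' • (w + (∑ i, (η' i - η i) * w i) • vQ)) i)
      = η' i * b i + lP * (η' i * w i)
        + (∑ i, (η' i - η i) * (b + lP • w) i) * (η' i * vQ i)
        + (κ' - κ) * (η' i * vQ i)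
        + l' * (η' i * w i)
        + l' * (∑ i, (η' i - η i) * w i) * (η' i * vQ i) := by
    intro i
    simp only [Pi.add_apply, Pi.smul_apply, smul_eq_mul]
    ring
  have e2 : ∀ i, (η' i - η i) * (b + lP • w) i
      = η' i * b i - η i * b i + lP * (η' i * w i) - lP * (η i * w i) := by
    intro i
    simp only [Pi.add_apply, Pi.smul_apply, smul_eq_mul]
    ring
  have e3 : ∀ i, (η' i - η i) * w i = η' i * w i - η i * w i := by
    intro i; ring
  have e4 : ∀ i, η i * (b + lP • w) i = η i * b i + lP * (η i * w i) := by
    intro i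
    simp only [Pi.add_apply, Pi.smul_apply, smul_eq_mul]
    ring
  simp only [Finset.sum_congr rfl fun i _ => e1 i] at hexit
  simp only [Finset.sum_congr rfl fun i _ => e2 i,
    Finset.sum_congr rfl fun i _ => e3 i,
    Finset.sum_congr rfl fun i _ => e4 i,
    Finset.sum_add_distrib, Finset.sum_sub_distrib,
    ← Finset.mul_sum] at hexit hxin ⊢
  rw [le_div_iff₀ (by linarith : 0 < -(∑ i, η i * w i))]
  rw [h2] at hexit
  nlinarith [hexit, hxin]
end

section
/- Let a, b, m, n be positive integers with m ≥ n and a·n ≥ m·b (i.e., m/n ≤ a/b). Then (b + 1)·⌈m/n⌉ ≤ 2a. -/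
/-! Put `E = ⌈m/n⌉`. Then `(E - 1) n < m`, so `b (E - 1) n < m b ≤ a n` and hence `b (E - 1) < a`,
i.e. `a ≥ b (E - 1) + 1`. For `E ≥ 2` this gives `2a ≥ (b + 1) E + (b - 1)(E - 2) ≥ (b + 1) E`;
for `E = 1` it suffices that `b ≤ a`, which follows from `n ≤ m`. -/

lemma ceil_div_sub_one_mul_lt (m n : ℕ) (hn : 0 < n) :
    (⌈(m : ℚ) / n⌉ - 1) * (n : ℤ) < m := by
  have hlt : ((⌈(m : ℚ) / n⌉ - 1 : ℤ) : ℚ) < m / n := by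
    push_cast
    linarith [Int.ceil_lt_add_one ((m : ℚ) / n)]
  exact_mod_cast (lt_div_iff₀ (by positivity : (0 : ℚ) < n)).mp hlt

lemma mul_ceil_div_sub_one_lt {a b m n : ℕ} (hb : 0 < b) (hn : 0 < n) (hab : m * b ≤ a * n) :
    (b : ℤ) * (⌈(m : ℚ) / n⌉ - 1) < a := by
  refine lt_of_mul_lt_mul_right ?_ (Int.natCast_nonneg n)
  calc (b : ℤ) * (⌈(m : ℚ) / n⌉ - 1) * n = b * ((⌈(m : ℚ) / n⌉ - 1) * n) := mul_assoc _ _ _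
    _ < b * m := by gcongr; exact ceil_div_sub_one_mul_lt m n hn
    _ = m * b := mul_comm _ _
    _ ≤ a * n := by exact_mod_cast hab

lemma succ_mul_le_two_mul {a b E : ℤ} (hb : 1 ≤ b) (hE : 1 ≤ E) (hba : b ≤ a)
    (h : b * (E - 1) < a) : (b + 1) * E ≤ 2 * a := by
  rcases hE.eq_or_lt with rfl | hE
  · linarith
  · have hE2 : (2 : ℤ) ≤ E := hE
    nlinarith [mul_nonneg (sub_nonneg.mpr hb) (sub_nonneg.mpr hE2)]

theorem stmt8_general (a b m n : ℕ) (hb : 0 < b) (hn : 0 < n)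
    (hmn : n ≤ m) (hab : m * b ≤ a * n) :
    ((b : ℤ) + 1) * ⌈(m : ℚ) / (n : ℚ)⌉ ≤ 2 * (a : ℤ) := by
  have hba : b ≤ a :=
    Nat.le_of_mul_le_mul_left (by linarith [Nat.mul_le_mul_right b hmn]) hn
  refine succ_mul_le_two_mul (by exact_mod_cast hb) ?_ (by exact_mod_cast hba)
    (mul_ceil_div_sub_one_lt hb hn hab)
  have hm : (0 : ℚ) < m := by exact_mod_cast hn.trans_le hmn
  exact Int.one_le_ceil_iff.mpr (by positivity)

/-- If m/n ≤ a/b (positive integers, m ≥ n), then (b+1)·⌈m/n⌉ ≤ 2a. -/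
theorem stmt8 (a b m n : ℕ) (ha : 0 < a) (hb : 0 < b) (hm : 0 < m) (hn : 0 < n)
    (hmn : n ≤ m) (hab : m * b ≤ a * n) :
    ((b : ℤ) + 1) * ⌈(m : ℚ) / (n : ℚ)⌉ ≤ 2 * (a : ℤ) :=
  stmt8_general a b m n hb hn hmn hab
end
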